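/- arXiv:2503.21264 — 6 statements merged into one kernel-verified Lean document; each statement's English description precedes it below -/
import Mathlib

section
/- A grounding claim Γ < α is provable in the calculus G (with the Amalgamation rule, without the ∗ rules for disjunction) if and only if Γ is a finite union of grounding bars for α. -/
inductive Formula : Type
  | atom : ℕ → Formula
  | bot : Formula
  | and : Formula → Formula → Formula
  | or : Formula → Formula → Formula
  | neg : Formula → Formula
  deriving DecidableEq

namespace Formula

/-- The grounding calculus `G`, parameterised by whether the `∗` rules for
disjunction (and negated conjunction) are present (`star`) and whether the
Amalgamation rule is present (`am`).  Grounds are finite sets of formulas,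
so set contraction is implicit. -/
inductive Proves (star am : Bool) : Finset Formula → Formula → Prop
  -- 0-premiss rules
  | andI0 (α β : Formula) : Proves star am {α, β} (α.and β)
  | orI0l (α β : Formula) : Proves star am {α} (α.or β)
  | orI0r (α β : Formula) : Proves star am {β} (α.or β)
  | orI0both (α β : Formula) (h : star = true) : Proves star am {α, β} (α.or β)
  | nandI0l (α β : Formula) : Proves star am {α.neg} (α.and β).neg
  | nandI0r (α β : Formula) : Proves star am {β.neg} (α.and β).neg
  | nandI0both (α β : Formula) (h : star = true) : Proves star am {α.neg, β.neg} (α.and β).neg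
  | norI0 (α β : Formula) : Proves star am {α.neg, β.neg} (α.or β).neg
  | nnI0 (α : Formula) : Proves star am {α} α.neg.neg
  -- introduction rules
  | andI {Γ Δ : Finset Formula} {α β : Formula} : Proves star am Γ α → Proves star am Δ β →
      Proves star am (Γ ∪ Δ) (α.and β)
  | orIl {Γ : Finset Formula} {α β : Formula} : Proves star am Γ α → Proves star am Γ (α.or β)
  | orIr {Γ : Finset Formula} {α β : Formula} : Proves star am Γ β → Proves star am Γ (α.or β)
  | orIboth {Γ Δ : Finset Formula} {α β : Formula} (h : star = true) : Proves star am Γ α → Proves star am Δ β →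
      Proves star am (Γ ∪ Δ) (α.or β)
  | nandIl {Γ : Finset Formula} {α β : Formula} : Proves star am Γ α.neg → Proves star am Γ (α.and β).neg
  | nandIr {Γ : Finset Formula} {α β : Formula} : Proves star am Γ β.neg → Proves star am Γ (α.and β).neg
  | nandIboth {Γ Δ : Finset Formula} {α β : Formula} (h : star = true) : Proves star am Γ α.neg → Proves star am Δ β.neg →
      Proves star am (Γ ∪ Δ) (α.and β).neg
  | norI {Γ Δ : Finset Formula} {α β : Formula} : Proves star am Γ α.neg → Proves star am Δ β.neg →
      Proves star am (Γ ∪ Δ) (α.or β).neg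
  | nnI {Γ : Finset Formula} {α : Formula} : Proves star am Γ α → Proves star am Γ α.neg.neg
  -- elimination rules (replacing a member of the ground)
  | andE {Γ : Finset Formula} {β γ δ : Formula} (h : (β.and γ) ∈ Γ) : Proves star am Γ δ →
      Proves star am (Γ.erase (β.and γ) ∪ {β, γ}) δ
  | orEl {Γ : Finset Formula} {β γ δ : Formula} (h : (β.or γ) ∈ Γ) : Proves star am Γ δ →
      Proves star am (Γ.erase (β.or γ) ∪ {β}) δ
  | orEr {Γ : Finset Formula} {β γ δ : Formula} (h : (β.or γ) ∈ Γ) : Proves star am Γ δ →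
      Proves star am (Γ.erase (β.or γ) ∪ {γ}) δ
  | orEboth {Γ : Finset Formula} {β γ δ : Formula} (hs : star = true) (h : (β.or γ) ∈ Γ) : Proves star am Γ δ →
      Proves star am (Γ.erase (β.or γ) ∪ {β, γ}) δ
  | nandEl {Γ : Finset Formula} {β γ δ : Formula} (h : (β.and γ).neg ∈ Γ) : Proves star am Γ δ →
      Proves star am (Γ.erase (β.and γ).neg ∪ {β.neg}) δ
  | nandEr {Γ : Finset Formula} {β γ δ : Formula} (h : (β.and γ).neg ∈ Γ) : Proves star am Γ δ →
      Proves star am (Γ.erase (β.and γ).neg ∪ {γ.neg}) δ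
  | nandEboth {Γ : Finset Formula} {β γ δ : Formula} (hs : star = true) (h : (β.and γ).neg ∈ Γ) : Proves star am Γ δ →
      Proves star am (Γ.erase (β.and γ).neg ∪ {β.neg, γ.neg}) δ
  | norE {Γ : Finset Formula} {β γ δ : Formula} (h : (β.or γ).neg ∈ Γ) : Proves star am Γ δ →
      Proves star am (Γ.erase (β.or γ).neg ∪ {β.neg, γ.neg}) δ
  | nnE {Γ : Finset Formula} {β δ : Formula} (h : β.neg.neg ∈ Γ) : Proves star am Γ δ →
      Proves star am (Γ.erase β.neg.neg ∪ {β}) δ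
  -- Amalgamation
  | am {Γ Δ : Finset Formula} {α : Formula} (h : am = true) : Proves star am Γ α → Proves star am Δ α →
      Proves star am (Γ ∪ Δ) α

/-- The formula at a node, with `~` prefixed when the node is negative. -/
def sgn (pos : Bool) (α : Formula) : Formula := if pos then α else α.neg

/-- `BarRel star pos α B`: `B` is (the set of signed formulas of) a bar of some
selection tree of the syntactic tree of `α`, where `α`'s root lies at polarity
`pos` (positive/negative according to the parity of `~`-nodes above it).
The trivial bar `{sgn pos α}` (containing the root) is included; feeble nodes
(positive `∨`-nodes, negative `∧`-nodes) have exactly one child kept, or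
possibly both when the `∗` rules are present (`star = true`). -/
inductive BarRel (star : Bool) : Bool → Formula → Finset Formula → Prop
  | triv (pos : Bool) (α : Formula) : BarRel star pos α {sgn pos α}
  | and_pos {β γ : Formula} {B₁ B₂ : Finset Formula} : BarRel star true β B₁ → BarRel star true γ B₂ →
      BarRel star true (β.and γ) (B₁ ∪ B₂)
  | and_neg_l {β γ : Formula} {B : Finset Formula} : BarRel star false β B → BarRel star false (β.and γ) B
  | and_neg_r {β γ : Formula} {B : Finset Formula} : BarRel star false γ B → BarRel star false (β.and γ) B
  | and_neg_both {β γ : Formula} {B₁ B₂ : Finset Formula} (h : star = true) :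
      BarRel star false β B₁ → BarRel star false γ B₂ →
      BarRel star false (β.and γ) (B₁ ∪ B₂)
  | or_pos_l {β γ : Formula} {B : Finset Formula} : BarRel star true β B → BarRel star true (β.or γ) B
  | or_pos_r {β γ : Formula} {B : Finset Formula} : BarRel star true γ B → BarRel star true (β.or γ) B
  | or_pos_both {β γ : Formula} {B₁ B₂ : Finset Formula} (h : star = true) :
      BarRel star true β B₁ → BarRel star true γ B₂ →
      BarRel star true (β.or γ) (B₁ ∪ B₂)
  | or_neg {β γ : Formula} {B₁ B₂ : Finset Formula} : BarRel star false β B₁ → BarRel star false γ B₂ →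
      BarRel star false (β.or γ) (B₁ ∪ B₂)
  | neg (pos) {β : Formula} {B : Finset Formula} : BarRel star (!pos) β B → BarRel star pos β.neg B

/-- A grounding bar for `α`: a bar of a selection tree of `α` (with `~`
prefixed at negative nodes) which is non-trivial, i.e. neither contains the
root nor the (signed) only child of the root, which amounts to the bar not
being the singleton of `α` itself. -/
def GroundingBar (star : Bool) (α : Formula) (B : Finset Formula) : Prop :=
  BarRel star true α B ∧ B ≠ {α}

/-- Subformula relation. -/
inductive Sub : Formula → Formula → Prop
  | refl (α : Formula) : Sub α α
  | and_l {α β γ : Formula} : Sub α β → Sub α (β.and γ)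
  | and_r {α β γ : Formula} : Sub α γ → Sub α (β.and γ)
  | or_l {α β γ : Formula} : Sub α β → Sub α (β.or γ)
  | or_r {α β γ : Formula} : Sub α γ → Sub α (β.or γ)
  | neg {α β : Formula} : Sub α β → Sub α β.neg

/-- Proper subformula. -/
def ProperSub (α β : Formula) : Prop := Sub α β ∧ α ≠ β

end Formula

/-!
Soundness is by induction on derivations. A 0-premiss rule `S < x` is a one-step bar of `x`;
introduction rules carry bars of the premisses one level up; an elimination rule replaces a
member `x` of a ground by a one-step bar of `x`, and bars compose; Amalgamation unites the
families. Nontriviality is tracked by size: the members of a grounding bar for `α` are strictly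
smaller than `α`.

Completeness: a nontrivial bar `B` of `α` begins with a one-step bar `S` of `α`, so `S < α` is a
0-premiss rule, and each member of `S` is then replaced by its part of `B` through elimination
rules, Amalgamation restoring an eliminated formula that occurs elsewhere in the ground.
Amalgamation finally unites the bars.
-/

open scoped FinsetFamily

namespace Finset

variable {α : Type*}

theorem sup_id_sups [DecidableEq α] [SemilatticeSup α] [OrderBot α] {s t : Finset α}
    (hs : s.Nonempty) (ht : t.Nonempty) : (s ⊻ t).sup id = s.sup id ⊔ t.sup id := by
  obtain ⟨a₀, ha₀⟩ := hs
  obtain ⟨b₀, hb₀⟩ := ht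
  refine le_antisymm (Finset.sup_le <| forall_sups_iff.2 fun a ha b hb => ?_) (_root_.sup_le ?_ ?_)
  · exact sup_le_sup (le_sup (f := id) ha) (le_sup (f := id) hb)
  · exact Finset.sup_le fun a ha => le_sup_left.trans (le_sup (f := id) (sup_mem_sups ha hb₀))
  · exact Finset.sup_le fun b hb => le_sup_right.trans (le_sup (f := id) (sup_mem_sups ha₀ hb))

variable [DecidableEq α]

def replace (s : Finset α) (a : α) (t : Finset α) : Finset α :=
  if a ∈ s then s.erase a ∪ t else s

theorem replace_of_mem {s t : Finset α} {a : α} (h : a ∈ s) : s.replace a t = s.erase a ∪ t :=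
  if_pos h

theorem replace_union (s s' t : Finset α) (a : α) :
    (s ∪ s').replace a t = s.replace a t ∪ s'.replace a t := by
  unfold replace
  split_ifs <;> ext y <;> by_cases y = a <;> simp_all <;> tauto

theorem sup_replace (𝒢 : Finset (Finset α)) (a : α) (t : Finset α) :
    (𝒢.sup id).replace a t = 𝒢.sup (·.replace a t) :=
  apply_sup_eq_sup_comp (·.replace a t) (fun s s' => replace_union s s' t a) (by simp [replace])

end Finset

namespace Formula

open Finset

def size : Formula → ℕ
  | and α β | or α β => α.size + β.size + 1
  | neg α => α.size + 1
  | _ => 1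

@[simp] theorem sgn_true (α : Formula) : sgn true α = α := rfl

variable {star pos : Bool} {α β γ x : Formula} {B C S Γ Δ : Finset Formula}

theorem barRel_true_neg_iff : BarRel star true β.neg B ↔ BarRel star false β B := by
  refine ⟨fun h => ?_, .neg true⟩
  cases h with
  | triv => exact .triv false β
  | neg _ h => exact h

theorem barRel_true_sgn_iff : BarRel star true (sgn pos β) B ↔ BarRel star pos β B := by
  cases pos
  · exact barRel_true_neg_iff
  · rfl

theorem BarRel.eq_singleton_or_size_lt (h : BarRel star pos γ B) :
    B = {sgn pos γ} ∨ ∀ x ∈ B, x.size < (sgn pos γ).size := by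
  induction h <;> grind [size, sgn]

theorem groundingBar_iff_size_lt :
    GroundingBar star α B ↔ BarRel star true α B ∧ ∀ x ∈ B, x.size < α.size := by
  refine ⟨fun h => ⟨h.1, h.1.eq_singleton_or_size_lt.resolve_left h.2⟩,
    fun h => ⟨h.1, ?_⟩⟩
  rintro rfl
  exact lt_irrefl _ (h.2 α (mem_singleton_self α))

theorem BarRel.replace (hB : BarRel star pos γ B) (hC : BarRel star true x C) :
    BarRel star pos γ (B.replace x C) := by
  induction hB with
  | triv pos α =>
    by_cases hx : x = sgn pos α
    · subst hx
      simpa [Finset.replace] using barRel_true_sgn_iff.1 hC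
    · simpa [Finset.replace, hx] using .triv pos α
  | and_pos _ _ ih₁ ih₂ => rw [replace_union]; exact .and_pos ih₁ ih₂
  | and_neg_l _ ih => exact .and_neg_l ih
  | and_neg_r _ ih => exact .and_neg_r ih
  | and_neg_both h _ _ ih₁ ih₂ => rw [replace_union]; exact .and_neg_both h ih₁ ih₂
  | or_pos_l _ ih => exact .or_pos_l ih
  | or_pos_r _ ih => exact .or_pos_r ih
  | or_pos_both h _ _ ih₁ ih₂ => rw [replace_union]; exact .or_pos_both h ih₁ ih₂
  | or_neg _ _ ih₁ ih₂ => rw [replace_union]; exact .or_neg ih₁ ih₂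
  | neg pos _ ih => exact .neg pos ih

/-- `S < x` is a 0-premiss rule of `G` without the `∗` rules, and the elimination rules replace
`x` in a ground by `S`. -/
inductive Elim : Formula → Finset Formula → Prop
  | andE (β γ : Formula) : Elim (β.and γ) {β, γ}
  | orEl (β γ : Formula) : Elim (β.or γ) {β}
  | orEr (β γ : Formula) : Elim (β.or γ) {γ}
  | nandEl (β γ : Formula) : Elim (β.and γ).neg {β.neg}
  | nandEr (β γ : Formula) : Elim (β.and γ).neg {γ.neg}
  | norE (β γ : Formula) : Elim (β.or γ).neg {β.neg, γ.neg}
  | nnE (β : Formula) : Elim β.neg.neg {β}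

theorem Elim.size_lt (he : Elim x S) : ∀ y ∈ S, y.size < x.size := by
  cases he <;> simp [size]

theorem Elim.barRel (he : Elim x S) : BarRel star true x S := by
  cases he with
  | andE β γ => rw [insert_eq]; exact .and_pos (.triv true β) (.triv true γ)
  | orEl β γ => exact .or_pos_l (.triv true β)
  | orEr β γ => exact .or_pos_r (.triv true γ)
  | nandEl β γ => exact .neg true (.and_neg_l (.triv false β))
  | nandEr β γ => exact .neg true (.and_neg_r (.triv false γ))
  | norE β γ => rw [insert_eq]; exact .neg true (.or_neg (.triv false β) (.triv false γ))
  | nnE β => exact .neg true (.neg false (.triv true β))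

theorem Elim.groundingBar (he : Elim x S) : GroundingBar star x S :=
  groundingBar_iff_size_lt.2 ⟨he.barRel, he.size_lt⟩

theorem Elim.proves {star am : Bool} (he : Elim x S) : Proves star am S x := by
  cases he with
  | andE => exact .andI0 _ _
  | orEl => exact .orI0l _ _
  | orEr => exact .orI0r _ _
  | nandEl => exact .nandI0l _ _
  | nandEr => exact .nandI0r _ _
  | norE => exact .norI0 _ _
  | nnE => exact .nnI0 _

theorem Elim.proves_erase_union {star am : Bool} {δ : Formula} (he : Elim x S) (hx : x ∈ Γ)
    (h : Proves star am Γ δ) : Proves star am (Γ.erase x ∪ S) δ := by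
  cases he with
  | andE => exact .andE hx h
  | orEl => exact .orEl hx h
  | orEr => exact .orEr hx h
  | nandEl => exact .nandEl hx h
  | nandEr => exact .nandEr hx h
  | norE => exact .norE hx h
  | nnE => exact .nnE hx h

def Replaces (star : Bool) (A B : Finset Formula) : Prop :=
  ∀ Γ δ, Proves star true (Γ ∪ A) δ → Proves star true (Γ ∪ B) δ

theorem Replaces.refl (A : Finset Formula) : Replaces star A A := fun _ _ h => h

theorem Replaces.trans {A : Finset Formula} (h₁ : Replaces star A B) (h₂ : Replaces star B C) :
    Replaces star A C :=
  fun Γ δ h => h₂ Γ δ (h₁ Γ δ h)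

theorem Replaces.union {A A' B' : Finset Formula} (h : Replaces star A B)
    (h' : Replaces star A' B') :
    Replaces star (A ∪ A') (B ∪ B') := by
  intro Γ δ hΓ
  have hB : Proves star true (Γ ∪ B ∪ A') δ := by
    rw [union_right_comm]
    exact h _ δ (by rwa [union_right_comm, union_assoc])
  simpa only [union_assoc] using h' _ δ hB

/-- If `x` also occurs in `Γ`, the elimination rule loses it, and amalgamating with the original
derivation puts it back. -/
theorem Elim.replaces (he : Elim x S) : Replaces star {x} S := by
  intro Γ δ h
  have h' := he.proves_erase_union (mem_union_right Γ (mem_singleton_self x)) h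
  by_cases hx : x ∈ Γ
  · convert Proves.am rfl h h' using 1
    ext y
    by_cases y = x <;> simp_all
  · rwa [union_singleton, erase_insert hx] at h'

theorem BarRel.replaces (h : BarRel false pos γ B) : Replaces star {sgn pos γ} B := by
  induction h with
  | triv => exact .refl _
  | and_pos _ _ ih₁ ih₂ =>
    exact (Elim.andE _ _).replaces.trans (by rw [insert_eq]; exact ih₁.union ih₂)
  | and_neg_l _ ih => exact (Elim.nandEl _ _).replaces.trans ih
  | and_neg_r _ ih => exact (Elim.nandEr _ _).replaces.trans ih
  | or_pos_l _ ih => exact (Elim.orEl _ _).replaces.trans ih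
  | or_pos_r _ ih => exact (Elim.orEr _ _).replaces.trans ih
  | or_neg _ _ ih₁ ih₂ =>
    exact (Elim.norE _ _).replaces.trans (by rw [insert_eq]; exact ih₁.union ih₂)
  | neg pos _ ih =>
    cases pos
    · exact (Elim.nnE _).replaces.trans ih
    · exact ih
  | and_neg_both h | or_pos_both h => cases h

theorem BarRel.exists_elim_replaces (h : BarRel false pos γ B) (hB : B ≠ {sgn pos γ}) :
    ∃ S, Elim (sgn pos γ) S ∧ Replaces star S B := by
  induction h with
  | triv => exact absurd rfl hB
  | and_pos h₁ h₂ =>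
    exact ⟨_, .andE _ _, by rw [insert_eq]; exact h₁.replaces.union h₂.replaces⟩
  | and_neg_l h => exact ⟨_, .nandEl _ _, h.replaces⟩
  | and_neg_r h => exact ⟨_, .nandEr _ _, h.replaces⟩
  | or_pos_l h => exact ⟨_, .orEl _ _, h.replaces⟩
  | or_pos_r h => exact ⟨_, .orEr _ _, h.replaces⟩
  | or_neg h₁ h₂ =>
    exact ⟨_, .norE _ _, by rw [insert_eq]; exact h₁.replaces.union h₂.replaces⟩
  | neg pos h ih =>
    cases pos
    · exact ⟨_, .nnE _, h.replaces⟩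
    · exact ih hB
  | and_neg_both h | or_pos_both h => cases h

theorem GroundingBar.proves (h : GroundingBar false α B) : Proves star true B α := by
  obtain ⟨S, hS, hSB⟩ := h.1.exists_elim_replaces h.2
  simpa using hSB ∅ α (by simpa using hS.proves)

def IsBarUnion (star : Bool) (α : Formula) (Γ : Finset Formula) : Prop :=
  ∃ 𝒢 : Finset (Finset Formula), 𝒢.Nonempty ∧ (∀ B ∈ 𝒢, GroundingBar star α B) ∧
    Γ = 𝒢.sup id

theorem IsBarUnion.proves (h : IsBarUnion false α Γ) : Proves star true Γ α := by
  obtain ⟨𝒢, hne, hbar, rfl⟩ := h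
  rw [← sup'_eq_sup hne]
  exact sup'_induction (p := (Proves star true · α)) hne id
    (fun _ h₁ _ h₂ => .am rfl h₁ h₂) fun B hB => (hbar B hB).proves

theorem GroundingBar.isBarUnion (h : GroundingBar star α B) : IsBarUnion star α B :=
  ⟨{B}, singleton_nonempty B, by simpa using h, by simp⟩

theorem IsBarUnion.union (h₁ : IsBarUnion star α Γ) (h₂ : IsBarUnion star α Δ) :
    IsBarUnion star α (Γ ∪ Δ) := by
  obtain ⟨𝒢, hne, hbar, rfl⟩ := h₁
  obtain ⟨ℋ, -, hbar', rfl⟩ := h₂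
  exact ⟨𝒢 ∪ ℋ, hne.mono subset_union_left,
    by simpa [or_imp, forall_and] using ⟨hbar, hbar'⟩, sup_union.symm⟩

theorem IsBarUnion.lift (h : IsBarUnion star β Γ)
    (hf : ∀ B, BarRel star true β B → BarRel star true α B) (hsize : β.size < α.size) :
    IsBarUnion star α Γ := by
  obtain ⟨𝒢, hne, hbar, rfl⟩ := h
  refine ⟨𝒢, hne, fun B hB => ?_, rfl⟩
  obtain ⟨hB, hlt⟩ := groundingBar_iff_size_lt.1 (hbar B hB)
  exact groundingBar_iff_size_lt.2 ⟨hf B hB, fun x hx => (hlt x hx).trans hsize⟩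

theorem IsBarUnion.lift₂ (h₁ : IsBarUnion star β Γ) (h₂ : IsBarUnion star γ Δ)
    (hf : ∀ B C, BarRel star true β B → BarRel star true γ C →
      BarRel star true α (B ∪ C))
    (hβ : β.size < α.size) (hγ : γ.size < α.size) : IsBarUnion star α (Γ ∪ Δ) := by
  obtain ⟨𝒢, hne, hbar, rfl⟩ := h₁
  obtain ⟨ℋ, hne', hbar', rfl⟩ := h₂
  refine ⟨𝒢 ⊻ ℋ, hne.sups hne', forall_sups_iff.2 fun B hB C hC => ?_,
    (sup_id_sups hne hne').symm⟩
  obtain ⟨hB, hltB⟩ := groundingBar_iff_size_lt.1 (hbar B hB)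
  obtain ⟨hC, hltC⟩ := groundingBar_iff_size_lt.1 (hbar' C hC)
  refine groundingBar_iff_size_lt.2 ⟨hf B C hB hC, fun x hx => ?_⟩
  rcases mem_union.1 hx with hx | hx
  exacts [(hltB x hx).trans hβ, (hltC x hx).trans hγ]

theorem IsBarUnion.erase_union (h : IsBarUnion star α Γ) (he : Elim x S) (hx : x ∈ Γ) :
    IsBarUnion star α (Γ.erase x ∪ S) := by
  obtain ⟨𝒢, hne, hbar, rfl⟩ := h
  refine ⟨𝒢.image (·.replace x S), hne.image _, forall_mem_image.2 fun B hB => ?_, ?_⟩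
  · obtain ⟨hB, hlt⟩ := groundingBar_iff_size_lt.1 (hbar B hB)
    refine groundingBar_iff_size_lt.2 ⟨hB.replace he.barRel, fun y hy => ?_⟩
    unfold Finset.replace at hy
    split_ifs at hy with hxB
    · rcases mem_union.1 hy with hy | hy
      exacts [hlt y (mem_of_mem_erase hy), (he.size_lt y hy).trans (hlt x hxB)]
    · exact hlt y hy
  · rw [← replace_of_mem hx, sup_image, sup_replace]
    rfl

theorem Proves.isBarUnion (h : Proves false true Γ α) : IsBarUnion false α Γ := by
  induction h with
  | andI0 => exact (Elim.andE _ _).groundingBar.isBarUnion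
  | orI0l => exact (Elim.orEl _ _).groundingBar.isBarUnion
  | orI0r => exact (Elim.orEr _ _).groundingBar.isBarUnion
  | nandI0l => exact (Elim.nandEl _ _).groundingBar.isBarUnion
  | nandI0r => exact (Elim.nandEr _ _).groundingBar.isBarUnion
  | norI0 => exact (Elim.norE _ _).groundingBar.isBarUnion
  | nnI0 => exact (Elim.nnE _).groundingBar.isBarUnion
  | andI _ _ ih₁ ih₂ =>
    exact ih₁.lift₂ ih₂ (fun _ _ => .and_pos) (by simp [size]) (by simp [size])
  | orIl _ ih => exact ih.lift (fun _ => .or_pos_l) (by simp [size])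
  | orIr _ ih => exact ih.lift (fun _ => .or_pos_r) (by simp [size])
  | nandIl _ ih =>
    exact ih.lift (fun _ h => .neg true (.and_neg_l (barRel_true_neg_iff.1 h))) (by simp [size])
  | nandIr _ ih =>
    exact ih.lift (fun _ h => .neg true (.and_neg_r (barRel_true_neg_iff.1 h))) (by simp [size])
  | norI _ _ ih₁ ih₂ =>
    exact ih₁.lift₂ ih₂
      (fun _ _ h₁ h₂ =>
        .neg true (.or_neg (barRel_true_neg_iff.1 h₁) (barRel_true_neg_iff.1 h₂)))
      (by simp [size]) (by simp [size])
  | nnI _ ih => exact ih.lift (fun _ h => .neg true (.neg false h)) (by simp [size])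
  | andE hx _ ih => exact ih.erase_union (.andE _ _) hx
  | orEl hx _ ih => exact ih.erase_union (.orEl _ _) hx
  | orEr hx _ ih => exact ih.erase_union (.orEr _ _) hx
  | nandEl hx _ ih => exact ih.erase_union (.nandEl _ _) hx
  | nandEr hx _ ih => exact ih.erase_union (.nandEr _ _) hx
  | norE hx _ ih => exact ih.erase_union (.norE _ _) hx
  | nnE hx _ ih => exact ih.erase_union (.nnE _) hx
  | am _ _ _ ih₁ ih₂ => exact ih₁.union ih₂
  | orI0both _ _ h | nandI0both _ _ h | orIboth h | nandIboth h | orEboth h | nandEboth h => cases h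

end Formula

open Formula

/-- `Γ < α` is provable in `G` (with Amalgamation, without the `∗` rules)
iff `Γ` is a finite union of grounding bars for `α`. -/
theorem provable_iff_union_of_grounding_bars (Γ : Finset Formula) (α : Formula) :
    Proves false true Γ α ↔
      ∃ 𝒢 : Finset (Finset Formula), 𝒢.Nonempty ∧
        (∀ B ∈ 𝒢, GroundingBar false α B) ∧ Γ = 𝒢.sup id :=
  ⟨Proves.isBarUnion, IsBarUnion.proves⟩
end

section
/- If Γ < α is provable in the calculus G, then every element of Γ is, up to a prefix of a single ~, a proper subformula of α: each γ ∈ Γ is either a proper subformula of α or of the form ~β for β a proper subformula of α. -/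
open Formula

/-! The relation "`γ` is a proper subformula of `δ`, or `γ = ~β` with `β` a proper subformula
of `δ`" is transitive, because a proper subformula of `~β` is a subformula of `β`. Every signed
immediate component of `δ` stands in this relation to `δ`, and every rule of `G` either draws
its ground from components of the conclusion, passes from a component to the conclusion, or
replaces a ground member by some of its components (Amalgamation only takes unions); so the
relation holds between every ground member and the conclusion, by induction on derivations. -/

namespace Formula

variable {a b c δ : Formula}

theorem Sub.trans (hab : Sub a b) (hbc : Sub b c) : Sub a c := by
  induction hbc with
  | refl => exact hab
  | and_l _ ih => exact .and_l ih
  | and_r _ ih => exact .and_r ih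
  | or_l _ ih => exact .or_l ih
  | or_r _ ih => exact .or_r ih
  | neg _ ih => exact .neg ih

theorem Sub.sizeOf_le (h : Sub a b) : sizeOf a ≤ sizeOf b := by
  induction h with
  | refl => exact le_rfl
  | and_l _ ih | and_r _ ih => rw [and.sizeOf_spec]; omega
  | or_l _ ih | or_r _ ih => rw [or.sizeOf_spec]; omega
  | neg _ ih => rw [neg.sizeOf_spec]; omega

theorem ProperSub.sizeOf_lt (h : ProperSub a b) : sizeOf a < sizeOf b := by
  obtain ⟨hab, hne⟩ := h
  cases hab with
  | refl => exact absurd rfl hne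
  | and_l h | and_r h => have := h.sizeOf_le; rw [and.sizeOf_spec]; omega
  | or_l h | or_r h => have := h.sizeOf_le; rw [or.sizeOf_spec]; omega
  | neg h => have := h.sizeOf_le; rw [neg.sizeOf_spec]; omega

theorem properSub_of_sizeOf_lt (h : Sub a b) (hlt : sizeOf a < sizeOf b) : ProperSub a b :=
  ⟨h, by rintro rfl; omega⟩

theorem ProperSub.trans_sub (hab : ProperSub a b) (hbc : Sub b c) : ProperSub a c :=
  properSub_of_sizeOf_lt (hab.1.trans hbc) (hab.sizeOf_lt.trans_le hbc.sizeOf_le)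

theorem Sub.trans_properSub (hab : Sub a b) (hbc : ProperSub b c) : ProperSub a c :=
  properSub_of_sizeOf_lt (hab.trans hbc.1) (hab.sizeOf_le.trans_lt hbc.sizeOf_lt)

theorem properSub_neg_iff : ProperSub a b.neg ↔ Sub a b := by
  refine ⟨fun ⟨h, hne⟩ => ?_, fun h => properSub_of_sizeOf_lt h.neg ?_⟩
  · cases h with
    | refl => exact absurd rfl hne
    | neg h => exact h
  · have := h.sizeOf_le
    rw [neg.sizeOf_spec]
    omega

def SignedProperSub (γ δ : Formula) : Prop :=
  ProperSub γ δ ∨ ∃ β, γ = β.neg ∧ ProperSub β δ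

/-- When `b = ~β`, a proper subformula of `b` is a subformula of `β`, hence proper in `c`. -/
theorem SignedProperSub.properSub_trans (hb : SignedProperSub b c) (ha : ProperSub a b) :
    ProperSub a c := by
  rcases hb with hbc | ⟨β, rfl, hβ⟩
  · exact ha.trans_sub hbc.1
  · exact (properSub_neg_iff.1 ha).trans_properSub hβ

theorem SignedProperSub.trans (ha : SignedProperSub a b) (hb : SignedProperSub b c) :
    SignedProperSub a c := by
  rcases ha with hab | ⟨β, rfl, hβ⟩
  · exact .inl (hb.properSub_trans hab)
  · exact .inr ⟨β, rfl, hb.properSub_trans hβ⟩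

/-- The signed immediate subformulas of a formula. The grounds of the 0-premiss rules of `G`
consist of components of the conclusion, each introduction rule passes from a component to the
formula, and each elimination rule replaces a member of the ground by some of its components. -/
inductive Component : Formula → Formula → Prop
  | and_l (a b : Formula) : Component a (a.and b)
  | and_r (a b : Formula) : Component b (a.and b)
  | or_l (a b : Formula) : Component a (a.or b)
  | or_r (a b : Formula) : Component b (a.or b)
  | nand_l (a b : Formula) : Component a.neg (a.and b).neg
  | nand_r (a b : Formula) : Component b.neg (a.and b).neg
  | nor_l (a b : Formula) : Component a.neg (a.or b).neg
  | nor_r (a b : Formula) : Component b.neg (a.or b).neg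
  | neg_neg (a : Formula) : Component a a.neg.neg

attribute [simp] Component.and_l Component.and_r Component.or_l Component.or_r Component.nand_l
  Component.nand_r Component.nor_l Component.nor_r Component.neg_neg

theorem Component.signedProperSub (h : Component c δ) : SignedProperSub c δ := by
  cases h with
  | and_l =>
    exact .inl <| properSub_of_sizeOf_lt (.and_l (.refl _)) (by rw [and.sizeOf_spec]; omega)
  | and_r =>
    exact .inl <| properSub_of_sizeOf_lt (.and_r (.refl _)) (by rw [and.sizeOf_spec]; omega)
  | or_l =>
    exact .inl <| properSub_of_sizeOf_lt (.or_l (.refl _)) (by rw [or.sizeOf_spec]; omega)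
  | or_r =>
    exact .inl <| properSub_of_sizeOf_lt (.or_r (.refl _)) (by rw [or.sizeOf_spec]; omega)
  | nand_l a b => exact .inr ⟨a, rfl, properSub_neg_iff.2 (.and_l (.refl _))⟩
  | nand_r a b => exact .inr ⟨b, rfl, properSub_neg_iff.2 (.and_r (.refl _))⟩
  | nor_l a b => exact .inr ⟨a, rfl, properSub_neg_iff.2 (.or_l (.refl _))⟩
  | nor_r a b => exact .inr ⟨b, rfl, properSub_neg_iff.2 (.or_r (.refl _))⟩
  | neg_neg a => exact .inl (properSub_neg_iff.2 (.neg (.refl _)))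

variable {Γ Θ : Finset Formula}

theorem forall_signedProperSub_of_forall_component (hΘ : ∀ c ∈ Θ, Component c δ) :
    ∀ γ ∈ Θ, SignedProperSub γ δ :=
  fun γ hγ => (hΘ γ hγ).signedProperSub

theorem Component.forall_signedProperSub (hc : Component c δ)
    (hΓ : ∀ γ ∈ Γ, SignedProperSub γ c) : ∀ γ ∈ Γ, SignedProperSub γ δ :=
  fun γ hγ => (hΓ γ hγ).trans hc.signedProperSub

theorem forall_signedProperSub_erase_union {x : Formula}
    (hΓ : ∀ γ ∈ Γ, SignedProperSub γ δ) (hx : x ∈ Γ)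
    (hΘ : ∀ c ∈ Θ, Component c x) :
    ∀ γ ∈ Γ.erase x ∪ Θ, SignedProperSub γ δ :=
  Finset.forall_mem_union.2 ⟨fun γ hγ => hΓ γ (Finset.mem_of_mem_erase hγ),
    fun c hc => (hΘ c hc).signedProperSub.trans (hΓ x hx)⟩

theorem Proves.forall_signedProperSub {star am : Bool} (h : Proves star am Γ δ) :
    ∀ γ ∈ Γ, SignedProperSub γ δ := by
  induction h with
  | andI0 | orI0l | orI0r | orI0both | nandI0l | nandI0r | nandI0both | norI0 | nnI0 =>
    exact forall_signedProperSub_of_forall_component (by simp)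
  | andI _ _ ih₁ ih₂ =>
    exact Finset.forall_mem_union.2 ⟨(Component.and_l _ _).forall_signedProperSub ih₁,
      (Component.and_r _ _).forall_signedProperSub ih₂⟩
  | orIl _ ih => exact (Component.or_l _ _).forall_signedProperSub ih
  | orIr _ ih => exact (Component.or_r _ _).forall_signedProperSub ih
  | orIboth _ _ _ ih₁ ih₂ =>
    exact Finset.forall_mem_union.2 ⟨(Component.or_l _ _).forall_signedProperSub ih₁,
      (Component.or_r _ _).forall_signedProperSub ih₂⟩
  | nandIl _ ih => exact (Component.nand_l _ _).forall_signedProperSub ih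
  | nandIr _ ih => exact (Component.nand_r _ _).forall_signedProperSub ih
  | nandIboth _ _ _ ih₁ ih₂ =>
    exact Finset.forall_mem_union.2 ⟨(Component.nand_l _ _).forall_signedProperSub ih₁,
      (Component.nand_r _ _).forall_signedProperSub ih₂⟩
  | norI _ _ ih₁ ih₂ =>
    exact Finset.forall_mem_union.2 ⟨(Component.nor_l _ _).forall_signedProperSub ih₁,
      (Component.nor_r _ _).forall_signedProperSub ih₂⟩
  | nnI _ ih => exact (Component.neg_neg _).forall_signedProperSub ih
  | andE hx _ ih | orEl hx _ ih | orEr hx _ ih | nandEl hx _ ih | nandEr hx _ ih | norE hx _ ih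
  | nnE hx _ ih | orEboth _ hx _ ih | nandEboth _ hx _ ih =>
    exact forall_signedProperSub_erase_union ih hx (by simp)
  | am _ _ _ ih₁ ih₂ => exact Finset.forall_mem_union.2 ⟨ih₁, ih₂⟩

end Formula

/-- Every member of a provable ground of `α` is, up to a prefix of a single
`~`, a proper subformula of `α`. -/
theorem ground_members_proper_subformulas (star am : Bool) (Γ : Finset Formula)
    (α : Formula) (h : Proves star am Γ α) :
    ∀ γ ∈ Γ, ProperSub γ α ∨ ∃ β, γ = β.neg ∧ ProperSub β α :=
  h.forall_signedProperSub
end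

section
/- Grounds compose across conjunction: if Γ < α and Δ < β are provable in G, then Γ∪Δ < α∧β is provable in G; conversely, every ground of α∧β provable in G (without ∗ rules and without Amalgamation) either equals {α,β}, or is of the form Γ∪{β} with Γ < α provable, or {α}∪Δ with Δ < β provable, or Γ∪Δ with both Γ < α and Δ < β provable. -/
open Formula

/-
A derivation of `α ∧ β` in `G` without Amalgamation starts with the 0-premiss rule or the
introduction rule, with ground `{α} ∪ {β}` or `Γ ∪ Δ` where `Γ < α`, `Δ < β`, and continues with
elimination steps. Each elimination replaces a member `φ` of the ground by a set `S` with `S < φ`;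
this keeps each half a ground of its conjunct, and turns a trivial half `{φ}` into the ground `S`.
-/

namespace Finset

variable {ι : Type*} [DecidableEq ι]

def replaceIn (s : Finset ι) (a : ι) (t : Finset ι) : Finset ι :=
  if a ∈ s then s.erase a ∪ t else s

theorem erase_union_eq_replaceIn_union {a : ι} {s t u : Finset ι} (h : a ∈ s ∪ t) :
    (s ∪ t).erase a ∪ u = s.replaceIn a u ∪ t.replaceIn a u := by
  unfold replaceIn
  ext x
  split_ifs <;> grind

end Finset

namespace Formula

variable {star am : Bool}

/-- `{α}` counts as a trivial ground of `α`. -/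
def ReflProves (star am : Bool) (Γ : Finset Formula) (α : Formula) : Prop :=
  Γ = {α} ∨ Proves star am Γ α

def ConjGround (star am : Bool) (Γ : Finset Formula) (α β : Formula) : Prop :=
  ∃ A B, Γ = A ∪ B ∧ ReflProves star am A α ∧ ReflProves star am B β

def Replaceable (star am : Bool) (φ : Formula) (S : Finset Formula) : Prop :=
  Proves star am S φ ∧
    ∀ {Θ : Finset Formula} {δ : Formula}, φ ∈ Θ → Proves star am Θ δ →
      Proves star am (Θ.erase φ ∪ S) δ

theorem ReflProves.replaceIn {φ α : Formula} {S A : Finset Formula}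
    (hφ : Replaceable star am φ S) (hA : ReflProves star am A α) :
    ReflProves star am (A.replaceIn φ S) α := by
  unfold Finset.replaceIn
  split_ifs with hmem
  · rcases hA with rfl | hA
    · obtain rfl := Finset.mem_singleton.1 hmem
      rw [Finset.erase_singleton, Finset.empty_union]
      exact .inr hφ.1
    · exact .inr (hφ.2 hmem hA)
  · exact hA

theorem ConjGround.replace {φ α β : Formula} {S Γ : Finset Formula}
    (hφ : Replaceable star am φ S) (hmem : φ ∈ Γ) (hΓ : ConjGround star am Γ α β) :
    ConjGround star am (Γ.erase φ ∪ S) α β := by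
  obtain ⟨A, B, rfl, hA, hB⟩ := hΓ
  exact ⟨_, _, Finset.erase_union_eq_replaceIn_union hmem, hA.replaceIn hφ, hB.replaceIn hφ⟩

theorem Proves.conjGround {Γ : Finset Formula} {δ : Formula} (h : Proves star false Γ δ) :
    ∀ {α β : Formula}, δ = α.and β → ConjGround star false Γ α β := by
  induction h with
  | andI0 α β =>
    rintro _ _ ⟨⟩
    exact ⟨{α}, {β}, Finset.insert_eq α {β}, .inl rfl, .inl rfl⟩
  | andI hΓ hΔ =>
    rintro _ _ ⟨⟩
    exact ⟨_, _, rfl, .inr hΓ, .inr hΔ⟩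
  | andE hm _ ih => exact fun hδ => (ih hδ).replace ⟨.andI0 _ _, .andE⟩ hm
  | orEl hm _ ih => exact fun hδ => (ih hδ).replace ⟨.orI0l _ _, .orEl⟩ hm
  | orEr hm _ ih => exact fun hδ => (ih hδ).replace ⟨.orI0r _ _, .orEr⟩ hm
  | orEboth hs hm _ ih => exact fun hδ => (ih hδ).replace ⟨.orI0both _ _ hs, .orEboth hs⟩ hm
  | nandEl hm _ ih => exact fun hδ => (ih hδ).replace ⟨.nandI0l _ _, .nandEl⟩ hm
  | nandEr hm _ ih => exact fun hδ => (ih hδ).replace ⟨.nandI0r _ _, .nandEr⟩ hm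
  | nandEboth hs hm _ ih =>
    exact fun hδ => (ih hδ).replace ⟨.nandI0both _ _ hs, .nandEboth hs⟩ hm
  | norE hm _ ih => exact fun hδ => (ih hδ).replace ⟨.norI0 _ _, .norE⟩ hm
  | nnE hm _ ih => exact fun hδ => (ih hδ).replace ⟨.nnI0 _, .nnE⟩ hm
  | am h => cases h
  | _ => rintro _ _ ⟨⟩

end Formula

/-- Grounds compose across conjunction, and conversely every ground of a
conjunction (in `G` without `∗` rules and without Amalgamation) decomposes. -/
theorem ground_conjunction :
    (∀ (star am : Bool) (Γ Δ : Finset Formula) (α β : Formula),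
      Proves star am Γ α → Proves star am Δ β →
        Proves star am (Γ ∪ Δ) (α.and β)) ∧
    (∀ (Γ : Finset Formula) (α β : Formula),
      Proves false false Γ (α.and β) →
        Γ = {α, β} ∨
        (∃ Γ₁, Γ = Γ₁ ∪ {β} ∧ Proves false false Γ₁ α) ∨
        (∃ Δ, Γ = {α} ∪ Δ ∧ Proves false false Δ β) ∨
        (∃ Γ₁ Δ, Γ = Γ₁ ∪ Δ ∧ Proves false false Γ₁ α ∧ Proves false false Δ β)) := by
  refine ⟨fun _ _ _ _ _ _ => Proves.andI, fun Γ α β h => ?_⟩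
  obtain ⟨A, B, rfl, hA | hA, hB | hB⟩ := h.conjGround rfl
  · subst hA hB
    exact .inl (Finset.insert_eq α {β}).symm
  · subst hA
    exact .inr (.inr (.inl ⟨B, rfl, hB⟩))
  · subst hB
    exact .inr (.inl ⟨A, rfl, hA⟩)
  · exact .inr (.inr (.inr ⟨A, B, rfl, hA, hB⟩))
end

section
/- Double-negation grounds coincide: Γ < ~~α is provable in G if and only if Γ < α is provable in G or Γ = {α}. -/
open Formula

/-!
Induct on a derivation of `Γ < ~~α`. Of the rules concluding `~~α`, the introductions `nnI0` and
`nnI` give `Γ = {α}` and `Γ < α`; all others are eliminations, and eliminations preserve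
"`Γ < α` or `Γ = {α}`": eliminating the only member `α` of `{α}` leaves exactly the premisses
of the 0-premiss rule for `α`. Amalgamation would break this, since `{α} ∪ Δ` need not ground `α`.
-/

namespace Formula

variable {star am : Bool}

def WeakProves (star am : Bool) (Γ : Finset Formula) (α : Formula) : Prop :=
  Proves star am Γ α ∨ Γ = {α}

theorem WeakProves.erase_union {Γ S : Finset Formula} {β δ : Formula}
    (hΓ : WeakProves star am Γ δ) (hβ : β ∈ Γ)
    (step : Proves star am Γ δ → Proves star am (Γ.erase β ∪ S) δ)
    (base : Proves star am S β) : WeakProves star am (Γ.erase β ∪ S) δ := by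
  rcases hΓ with h | rfl
  · exact .inl (step h)
  · obtain rfl : β = δ := Finset.mem_singleton.mp hβ
    rw [Finset.erase_singleton, Finset.empty_union]
    exact .inl base

theorem WeakProves.of_neg_neg {Γ : Finset Formula} {α : Formula}
    (h : Proves star false Γ α.neg.neg) : WeakProves star false Γ α := by
  generalize hφ : α.neg.neg = φ at h
  induction h generalizing α with
  | nnI0 => cases hφ; exact .inr rfl
  | nnI h => cases hφ; exact .inl h
  | andE hm _ ih => exact (ih hφ).erase_union hm (.andE hm) (.andI0 _ _)
  | orEl hm _ ih => exact (ih hφ).erase_union hm (.orEl hm) (.orI0l _ _)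
  | orEr hm _ ih => exact (ih hφ).erase_union hm (.orEr hm) (.orI0r _ _)
  | orEboth hs hm _ ih => exact (ih hφ).erase_union hm (.orEboth hs hm) (.orI0both _ _ hs)
  | nandEl hm _ ih => exact (ih hφ).erase_union hm (.nandEl hm) (.nandI0l _ _)
  | nandEr hm _ ih => exact (ih hφ).erase_union hm (.nandEr hm) (.nandI0r _ _)
  | nandEboth hs hm _ ih =>
    exact (ih hφ).erase_union hm (.nandEboth hs hm) (.nandI0both _ _ hs)
  | norE hm _ ih => exact (ih hφ).erase_union hm (.norE hm) (.norI0 _ _)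
  | nnE hm _ ih => exact (ih hφ).erase_union hm (.nnE hm) (.nnI0 _)
  | am ham => cases ham
  | _ => cases hφ

theorem WeakProves.proves_neg_neg {Γ : Finset Formula} {α : Formula}
    (h : WeakProves star am Γ α) : Proves star am Γ α.neg.neg := by
  rcases h with h | rfl
  · exact .nnI h
  · exact .nnI0 α

end Formula

/-- Double-negation grounds coincide: `Γ < ~~α` is provable iff `Γ < α` is
provable or `Γ = {α}` (in `G` without Amalgamation). -/
theorem ground_double_negation (star : Bool) (Γ : Finset Formula) (α : Formula) :
    Proves star false Γ α.neg.neg ↔ (Proves star false Γ α ∨ Γ = {α}) :=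
  ⟨WeakProves.of_neg_neg, WeakProves.proves_neg_neg⟩
end

section
/- Grounds of a negated conjunction select a conjunct: Γ < ~(α∧β) is provable in G (without Amalgamation and without ∗ rules) if and only if Γ = {~α}, or Γ = {~β}, or Γ < ~α is provable, or Γ < ~β is provable. -/
open Formula

/-!
Induct on a derivation of `Γ < ~(α∧β)`. Without Amalgamation and the `∗` rules, its last rule
is either a 0-premiss or introduction rule for `~(α∧β)`, which selects a conjunct directly, or
an elimination rule applied to a ground of `~(α∧β)`. The key point for the latter is that an
elimination rule applied to the one-element ground `{φ}` replaces `φ` by exactly the ground of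
a 0-premiss rule for `φ`. Hence "`Γ = {φ}` or `Γ < φ`" is preserved by elimination rules, and
the inductive hypothesis propagates.
-/

namespace Formula

variable {star am : Bool}

def ProvesRefl (star am : Bool) (Γ : Finset Formula) (φ : Formula) : Prop :=
  Γ = {φ} ∨ Proves star am Γ φ

theorem ProvesRefl.erase_union {Γ R : Finset Formula} {φ : Formula} (hφ : φ ∈ Γ)
    (hR : Proves star am R φ)
    (step : ∀ {δ}, Proves star am Γ δ → Proves star am (Γ.erase φ ∪ R) δ)
    {δ : Formula} (h : ProvesRefl star am Γ δ) : ProvesRefl star am (Γ.erase φ ∪ R) δ := by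
  rcases h with rfl | h
  · obtain rfl := Finset.mem_singleton.1 hφ
    rw [Finset.erase_singleton, Finset.empty_union]
    exact .inr hR
  · exact .inr (step h)

theorem Proves.provesRefl_of_neg_and {Γ : Finset Formula} {α β : Formula}
    (h : Proves false false Γ (α.and β).neg) :
    ProvesRefl false false Γ α.neg ∨ ProvesRefl false false Γ β.neg := by
  generalize hδ : (α.and β).neg = δ at h
  induction h with
  | nandI0l => cases hδ; exact .inl (.inl rfl)
  | nandI0r => cases hδ; exact .inr (.inl rfl)
  | nandIl h => cases hδ; exact .inl (.inr h)
  | nandIr h => cases hδ; exact .inr (.inr h)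
  | andE hm _ ih =>
    exact (ih hδ).imp (·.erase_union hm (.andI0 _ _) (.andE hm))
      (·.erase_union hm (.andI0 _ _) (.andE hm))
  | orEl hm _ ih =>
    exact (ih hδ).imp (·.erase_union hm (.orI0l _ _) (.orEl hm))
      (·.erase_union hm (.orI0l _ _) (.orEl hm))
  | orEr hm _ ih =>
    exact (ih hδ).imp (·.erase_union hm (.orI0r _ _) (.orEr hm))
      (·.erase_union hm (.orI0r _ _) (.orEr hm))
  | nandEl hm _ ih =>
    exact (ih hδ).imp (·.erase_union hm (.nandI0l _ _) (.nandEl hm))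
      (·.erase_union hm (.nandI0l _ _) (.nandEl hm))
  | nandEr hm _ ih =>
    exact (ih hδ).imp (·.erase_union hm (.nandI0r _ _) (.nandEr hm))
      (·.erase_union hm (.nandI0r _ _) (.nandEr hm))
  | norE hm _ ih =>
    exact (ih hδ).imp (·.erase_union hm (.norI0 _ _) (.norE hm))
      (·.erase_union hm (.norI0 _ _) (.norE hm))
  | nnE hm _ ih =>
    exact (ih hδ).imp (·.erase_union hm (.nnI0 _) (.nnE hm))
      (·.erase_union hm (.nnI0 _) (.nnE hm))
  | orI0both _ _ hs | nandI0both _ _ hs | orIboth hs | nandIboth hs | orEboth hs | nandEboth hs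
    | am hs => cases hs
  | _ => cases hδ

end Formula

/-- Grounds of a negated conjunction select a conjunct (in `G` without
Amalgamation and without the `∗` rules). -/
theorem ground_negated_conjunction (Γ : Finset Formula) (α β : Formula) :
    Proves false false Γ (α.and β).neg ↔
      (Γ = {α.neg} ∨ Γ = {β.neg} ∨
       Proves false false Γ α.neg ∨ Proves false false Γ β.neg) := by
  constructor
  · intro h
    have := h.provesRefl_of_neg_and
    unfold ProvesRefl at this
    tauto
  · rintro (rfl | rfl | h | h)
    · exact .nandI0l α β
    · exact .nandI0r α β
    · exact .nandIl h
    · exact .nandIr h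
end

section
/- With the ∗ rules included, the provable grounding claims strictly increase: {α, β} < α∨β is provable in G with the ∗ rules but not provable in G without the ∗ rules and without Amalgamation, for distinct sentence letters α and β. -/
open Formula

/-! Every rule of `G` concludes a compound formula or keeps the conclusion of its premiss, so no
atom is ever grounded. Hence without `∗` and Amalgamation the only ways to reach `p ∨ q` are the
0-premiss rules with grounds `{p}` and `{q}`: the one-premiss `∨`-introductions would need a ground
of an atom, and an elimination step would need a compound formula in one of these grounds. -/

namespace Formula

theorem Proves.ne_atom {star am : Bool} {Γ : Finset Formula} {δ : Formula}
    (hp : Proves star am Γ δ) (k : ℕ) : δ ≠ atom k := by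
  induction hp <;> first | assumption | simp

theorem Proves.eq_singleton_of_or_atoms {Γ : Finset Formula} {m n : ℕ}
    (hp : Proves false false Γ ((atom m).or (atom n))) : Γ = {atom m} ∨ Γ = {atom n} := by
  generalize hδ : (atom m).or (atom n) = δ at hp
  induction hp with
  | orI0l => cases hδ; exact .inl rfl
  | orI0r => cases hδ; exact .inr rfl
  | orIl hα => cases hδ; exact absurd rfl (hα.ne_atom m)
  | orIr hβ => cases hδ; exact absurd rfl (hβ.ne_atom n)
  | andE hmem _ ih | orEl hmem _ ih | orEr hmem _ ih | nandEl hmem _ ih | nandEr hmem _ ih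
  | norE hmem _ ih | nnE hmem _ ih =>
    rcases ih hδ with rfl | rfl <;> simp at hmem
  | _ => simp_all

end Formula

/-- With the `∗` rules, `{p, q} < p ∨ q` becomes provable, while it is not
provable without the `∗` rules and without Amalgamation, for distinct
sentence letters `p`, `q`. -/
theorem star_rules_strictly_stronger (m n : ℕ) (h : m ≠ n) :
    Proves true true {Formula.atom m, Formula.atom n}
        ((Formula.atom m).or (Formula.atom n)) ∧
    ¬ Proves false false {Formula.atom m, Formula.atom n}
        ((Formula.atom m).or (Formula.atom n)) := by
  refine ⟨.orI0both _ _ rfl, fun hp => ?_⟩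
  rcases hp.eq_singleton_of_or_atoms with hΓ | hΓ
  · rw [Finset.pair_comm, Finset.insert_eq_self] at hΓ
    simp_all
  · rw [Finset.insert_eq_self] at hΓ
    simp_all
end
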